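/- Suppose rank(Σ_{l=1}^L B_l) = K and |λ_K(Σ_{l=1}^L B_l)| ≥ c₁ L for some constant c₁ > 0. Let U, Â, Û and the orthogonal matrix Q be as follows: U ∈ R^{n×K} has orthonormal columns that are eigenvectors of Ω_sum corresponding to its K nonzero eigenvalues, ∈ R^{n×n} is symmetric, Û ∈ R^{n×K} has orthonormal columns that are eigenvectors of for its K largest-magnitude eigenvalues, every row of Û is nonzero, and Q is a K×K orthogonal matrix achieving ‖ÛQ − U‖_F ≤ 2√(2K)‖Â − Ω_sum‖/(c₁θ_min²n_minL). Let U_* and Û_* be obtained from U and Û by normalizing each row to unit Euclidean norm. Then ‖Û_*Q − U_*‖_F ≤ 4√(2K)·θ_max√(n_max)·‖Â − Ω_sum‖ / (c₁ θ_min³ n_min L). -/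

import Mathlib

open Matrix MeasureTheory ProbabilityTheory
open scoped BigOperators ENNReal

noncomputable section

/-- Euclidean norm of a finite real vector. -/
def vecNorm {m : ℕ} (v : Fin m → ℝ) : ℝ := Real.sqrt (∑ i, v i ^ 2)

/-- Frobenius norm of a real matrix. -/
def frobNorm {m p : ℕ} (M : Matrix (Fin m) (Fin p) ℝ) : ℝ :=
  Real.sqrt (∑ i, ∑ j, M i j ^ 2)

/-- Spectral norm (ℓ² operator norm) of a real matrix. -/
def specNorm {m p : ℕ} (M : Matrix (Fin m) (Fin p) ℝ) : ℝ :=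
  sSup ((fun x => vecNorm (M.mulVec x)) '' {x : Fin p → ℝ | vecNorm x ≤ 1})

open Classical in
/-- The k-th largest (1-indexed) eigenvalue in magnitude of a real symmetric matrix
(`0` if the matrix is not Hermitian). -/
def kthAbsEig {m : ℕ} (M : Matrix (Fin m) (Fin m) ℝ) (k : ℕ) : ℝ :=
  if hM : M.IsHermitian then
    (((Finset.univ : Finset (Fin m)).val.map fun i => |hM.eigenvalues i|).sort (· ≤ ·)).getD
      (m - k) 0
  else 0

/-- `Z` is a community membership matrix: 0/1 entries, exactly one 1 per row,
every column nonzero. -/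
def IsMembership {n K : ℕ} (Z : Matrix (Fin n) (Fin K) ℝ) : Prop :=
  (∀ i k, Z i k = 0 ∨ Z i k = 1) ∧ (∀ i, ∑ k, Z i k = 1) ∧ (∀ k, ∃ i, Z i k = 1)

/-- The MLDCSBM model hypotheses on the parameters `Z`, `θ`, `B`. -/
def MLDCSBM {n L K : ℕ} (Z : Matrix (Fin n) (Fin K) ℝ) (θ : Fin n → ℝ)
    (B : Fin L → Matrix (Fin K) (Fin K) ℝ) : Prop :=
  IsMembership Z ∧ (∀ i, 0 < θ i ∧ θ i ≤ 1) ∧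
    (∀ l, (B l).IsSymm ∧ ∀ a b, 0 ≤ B l a b ∧ B l a b ≤ 1)

/-- Ω_l = Θ Z B_l Zᵀ Θ. -/
def OmegaL {n K : ℕ} (θ : Fin n → ℝ) (Z : Matrix (Fin n) (Fin K) ℝ)
    (Bl : Matrix (Fin K) (Fin K) ℝ) : Matrix (Fin n) (Fin n) ℝ :=
  Matrix.diagonal θ * Z * Bl * Zᵀ * Matrix.diagonal θ

def thetaMin {n : ℕ} (θ : Fin n → ℝ) : ℝ := sInf (Set.range θ)
def thetaMax {n : ℕ} (θ : Fin n → ℝ) : ℝ := sSup (Set.range θ)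

/-- Minimum community size. -/
def nMin {n K : ℕ} (Z : Matrix (Fin n) (Fin K) ℝ) : ℝ :=
  sInf (Set.range fun k : Fin K => ∑ i, Z i k)

/-- Maximum community size. -/
def nMax {n K : ℕ} (Z : Matrix (Fin n) (Fin K) ℝ) : ℝ :=
  sSup (Set.range fun k : Fin K => ∑ i, Z i k)

/-- Column `k` of a matrix, as a vector. -/
def colVec {n K : ℕ} (U : Matrix (Fin n) (Fin K) ℝ) (k : Fin K) : Fin n → ℝ := fun i => U i k

/-- Row-normalized version of a matrix: each row divided by its Euclidean norm. -/
def rowNormalize {n K : ℕ} (U : Matrix (Fin n) (Fin K) ℝ) : Matrix (Fin n) (Fin K) ℝ :=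
  fun i k => U i k / vecNorm (fun j => U i j)

/-- Diagonal degree matrix of a square matrix. -/
def degDiag {n : ℕ} (M : Matrix (Fin n) (Fin n) ℝ) : Matrix (Fin n) (Fin n) ℝ :=
  Matrix.diagonal fun i => ∑ j, M i j

/-! Nonzero eigenvalues force the columns of `U` into the column space of `ΘZ`, so `U = ΘZX`
for a `K × K` matrix `X`. Orthonormality `UᵀU = Xᵀ(ZᵀΘ²Z)X = 1`, with `ZᵀΘ²Z = D` diagonal and
`X` square, gives `XXᵀ = D⁻¹`; hence the row `i` of `U` has squared norm
`θᵢ² / Σ_{ℓ(j) = ℓ(i)} θⱼ² ≥ θ_min² / (θ_max² n_max)`. The map `x ↦ x / ‖x‖` satisfies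
`‖x/‖x‖ - y/‖y‖‖ ≤ 2‖x - y‖/‖y‖`, and row normalization commutes with right multiplication by an
orthogonal `Q`, so the Frobenius bound on `ÛQ - U` transfers with the factor
`2 θ_max √n_max / θ_min`. -/

lemma vecNorm_eq_norm_toLp {m : ℕ} (v : Fin m → ℝ) : vecNorm v = ‖WithLp.toLp 2 v‖ := by
  simp [vecNorm, EuclideanSpace.norm_eq]

lemma vecNorm_sq {m : ℕ} (v : Fin m → ℝ) : vecNorm v ^ 2 = ∑ i, v i ^ 2 :=
  Real.sq_sqrt (Finset.sum_nonneg fun _ _ => sq_nonneg _)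

lemma vecNorm_row {m p : ℕ} (M : Matrix (Fin m) (Fin p) ℝ) (i : Fin m) :
    vecNorm (M i) = √((M * Mᵀ) i i) := by
  simp [vecNorm, Matrix.mul_apply, sq]

lemma vecNorm_mul_row {m p : ℕ} (M : Matrix (Fin m) (Fin p) ℝ) {Q : Matrix (Fin p) (Fin p) ℝ}
    (hQ : Q * Qᵀ = 1) (i : Fin m) : vecNorm ((M * Q) i) = vecNorm (M i) := by
  rw [vecNorm_row, vecNorm_row, Matrix.transpose_mul, Matrix.mul_assoc, ← Matrix.mul_assoc Q, hQ,
    Matrix.one_mul]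

lemma norm_inv_smul_sub_inv_smul_le {E : Type*} [NormedAddCommGroup E] [NormedSpace ℝ E]
    (x : E) {y : E} (hy : y ≠ 0) :
    ‖‖x‖⁻¹ • x - ‖y‖⁻¹ • y‖ ≤ 2 * ‖x - y‖ / ‖y‖ := by
  have hy' : 0 < ‖y‖ := norm_pos_iff.2 hy
  have hscale : ‖(‖x‖⁻¹ - ‖y‖⁻¹) • x‖ ≤ ‖x - y‖ / ‖y‖ := by
    rcases eq_or_ne x 0 with rfl | hx
    · simp only [smul_zero, norm_zero]; positivity
    have hx' : 0 < ‖x‖ := norm_pos_iff.2 hx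
    calc ‖(‖x‖⁻¹ - ‖y‖⁻¹) • x‖ = |‖x‖ - ‖y‖| / ‖y‖ := by
          rw [norm_smul, Real.norm_eq_abs, inv_sub_inv hx'.ne' hy'.ne', abs_div, abs_sub_comm,
            abs_of_pos (mul_pos hx' hy')]
          field_simp
      _ ≤ ‖x - y‖ / ‖y‖ := by gcongr; exact abs_norm_sub_norm_le x y
  calc ‖‖x‖⁻¹ • x - ‖y‖⁻¹ • y‖ = ‖‖y‖⁻¹ • (x - y) + (‖x‖⁻¹ - ‖y‖⁻¹) • x‖ := by
        congr 1; module
    _ ≤ ‖x - y‖ / ‖y‖ + ‖x - y‖ / ‖y‖ := by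
        refine (norm_add_le _ _).trans (add_le_add ?_ hscale)
        rw [norm_smul, norm_inv, norm_norm, inv_mul_eq_div]
    _ = 2 * ‖x - y‖ / ‖y‖ := by ring

lemma vecNorm_inv_smul_sub_inv_smul_le {m : ℕ} (x : Fin m → ℝ) {y : Fin m → ℝ} (hy : y ≠ 0) :
    vecNorm ((vecNorm x)⁻¹ • x - (vecNorm y)⁻¹ • y) ≤ 2 * vecNorm (x - y) / vecNorm y := by
  simp only [vecNorm_eq_norm_toLp, WithLp.toLp_sub, WithLp.toLp_smul]
  exact norm_inv_smul_sub_inv_smul_le _ (by simpa using hy)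

lemma frobNorm_eq_sqrt_sum_vecNorm_sq {m p : ℕ} (M : Matrix (Fin m) (Fin p) ℝ) :
    frobNorm M = √(∑ i, vecNorm (M i) ^ 2) := by
  simp only [frobNorm, vecNorm_sq]

lemma frobNorm_le_mul_of_vecNorm_row_le {m p : ℕ} {A B : Matrix (Fin m) (Fin p) ℝ} {c : ℝ}
    (hc : 0 ≤ c) (h : ∀ i, vecNorm (A i) ≤ c * vecNorm (B i)) :
    frobNorm A ≤ c * frobNorm B := by
  rw [frobNorm_eq_sqrt_sum_vecNorm_sq, frobNorm_eq_sqrt_sum_vecNorm_sq, ← Real.sqrt_sq hc,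
    ← Real.sqrt_mul (sq_nonneg c), Finset.mul_sum]
  refine Real.sqrt_le_sqrt (Finset.sum_le_sum fun i _ => ?_)
  rw [← mul_pow]
  exact pow_le_pow_left₀ (Real.sqrt_nonneg _) (h i) 2

lemma rowNormalize_apply {m p : ℕ} (M : Matrix (Fin m) (Fin p) ℝ) (i : Fin m) (k : Fin p) :
    rowNormalize M i k = M i k / vecNorm (M i) := rfl

lemma rowNormalize_row {m p : ℕ} (M : Matrix (Fin m) (Fin p) ℝ) (i : Fin m) :
    rowNormalize M i = (vecNorm (M i))⁻¹ • M i := by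
  ext k
  simp [rowNormalize_apply, div_eq_inv_mul]

lemma rowNormalize_mul {m p : ℕ} (M : Matrix (Fin m) (Fin p) ℝ) {Q : Matrix (Fin p) (Fin p) ℝ}
    (hQ : Q * Qᵀ = 1) : rowNormalize M * Q = rowNormalize (M * Q) := by
  ext i k
  rw [rowNormalize_apply, vecNorm_mul_row M hQ i, Matrix.mul_apply, Matrix.mul_apply,
    Finset.sum_div]
  simp only [rowNormalize_apply, div_mul_eq_mul_div]

lemma frobNorm_rowNormalize_sub_le {m p : ℕ} (M N : Matrix (Fin m) (Fin p) ℝ) {r : ℝ}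
    (hr : 0 < r) (hN : ∀ i, r ≤ vecNorm (N i)) :
    frobNorm (rowNormalize M - rowNormalize N) ≤ 2 / r * frobNorm (M - N) := by
  refine frobNorm_le_mul_of_vecNorm_row_le (by positivity) fun i => ?_
  have hNi : N i ≠ 0 := fun h => (hr.trans_le (hN i)).ne' (by simp [h, vecNorm])
  calc vecNorm ((rowNormalize M - rowNormalize N) i)
      = vecNorm ((vecNorm (M i))⁻¹ • M i - (vecNorm (N i))⁻¹ • N i) := by
        rw [← rowNormalize_row, ← rowNormalize_row]; rfl
    _ ≤ 2 * vecNorm (M i - N i) / vecNorm (N i) := vecNorm_inv_smul_sub_inv_smul_le (M i) hNi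
    _ ≤ 2 / r * vecNorm ((M - N) i) := by
        rw [div_mul_eq_mul_div]
        exact div_le_div_of_nonneg_left (mul_nonneg zero_le_two (Real.sqrt_nonneg _)) hr (hN i)

namespace IsMembership

variable {n K : ℕ} {Z : Matrix (Fin n) (Fin K) ℝ}

lemma nonneg (hZ : IsMembership Z) (i : Fin n) (k : Fin K) : 0 ≤ Z i k := by
  rcases hZ.1 i k with h | h <;> simp [h]

lemma one_le_sum_col (hZ : IsMembership Z) (k : Fin K) : 1 ≤ ∑ i, Z i k := by
  obtain ⟨i, hi⟩ := hZ.2.2 k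
  exact hi ▸ Finset.single_le_sum (fun j _ => hZ.nonneg j k) (Finset.mem_univ i)

lemma apply_mul_apply (hZ : IsMembership Z) (i : Fin n) (a b : Fin K) :
    Z i a * Z i b = if a = b then Z i a else 0 := by
  split_ifs with hab
  · subst hab; rcases hZ.1 i a with h | h <;> simp [h]
  · have hpair : Z i a + Z i b ≤ 1 := by
      rw [← hZ.2.1 i, ← Finset.sum_pair hab]
      exact Finset.sum_le_sum_of_subset_of_nonneg (Finset.subset_univ _)
        fun k _ _ => hZ.nonneg i k
    rcases hZ.1 i a with h | h
    · rw [h, zero_mul]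
    · rcases hZ.1 i b with h' | h'
      · rw [h', mul_zero]
      · linarith

lemma transpose_mul_diagonal_mul (hZ : IsMembership Z) (w : Fin n → ℝ) :
    Zᵀ * diagonal w * Z = diagonal fun k => ∑ i, w i * Z i k := by
  ext a b
  rw [Matrix.mul_apply, diagonal_apply]
  simp_rw [Matrix.mul_diagonal, Matrix.transpose_apply, mul_right_comm (Z _ a),
    hZ.apply_mul_apply, mul_comm (w _)]
  split_ifs <;> simp

lemma mul_diagonal_mul_transpose_apply_self (hZ : IsMembership Z) (v : Fin K → ℝ) (i : Fin n) :
    (Z * diagonal v * Zᵀ) i i = ∑ k, Z i k * v k := by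
  rw [Matrix.mul_apply]
  simp only [Matrix.mul_diagonal, Matrix.transpose_apply]
  refine Finset.sum_congr rfl fun k _ => ?_
  rw [mul_right_comm, hZ.apply_mul_apply, if_pos rfl]

lemma nMax_pos (hZ : IsMembership Z) (hK : 0 < K) : 0 < nMax Z :=
  zero_lt_one.trans_le <| (hZ.one_le_sum_col ⟨0, hK⟩).trans <|
    le_csSup (Set.finite_range _).bddAbove ⟨⟨0, hK⟩, rfl⟩

end IsMembership

lemma thetaMin_le {n : ℕ} (θ : Fin n → ℝ) (i : Fin n) : thetaMin θ ≤ θ i :=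
  csInf_le (Set.finite_range θ).bddBelow ⟨i, rfl⟩

lemma le_thetaMax {n : ℕ} (θ : Fin n → ℝ) (i : Fin n) : θ i ≤ thetaMax θ :=
  le_csSup (Set.finite_range θ).bddAbove ⟨i, rfl⟩

lemma thetaMin_pos {n : ℕ} (hn : 0 < n) {θ : Fin n → ℝ} (hθ : ∀ i, 0 < θ i) :
    0 < thetaMin θ := by
  have : Nonempty (Fin n) := ⟨⟨0, hn⟩⟩
  obtain ⟨i, hi⟩ := (Set.range_nonempty θ).csInf_mem (Set.finite_range θ)
  rw [thetaMin, ← hi]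
  exact hθ i

lemma exists_eq_mul_of_forall_mulVec_eq_smul {n p K : ℕ} {P : Matrix (Fin n) (Fin p) ℝ}
    {M : Matrix (Fin p) (Fin n) ℝ} {U : Matrix (Fin n) (Fin K) ℝ}
    (hU : ∀ k, ∃ μ : ℝ, μ ≠ 0 ∧ (P * M) *ᵥ colVec U k = μ • colVec U k) :
    ∃ X : Matrix (Fin p) (Fin K) ℝ, U = P * X := by
  choose μ hμ hU using hU
  have hPMU : P * M * U = U * diagonal μ := by
    ext i k
    rw [Matrix.mul_diagonal]
    simpa [Matrix.mul_apply, Matrix.mulVec, dotProduct, colVec, mul_comm] using congrFun (hU k) i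
  refine ⟨M * U * diagonal μ⁻¹, ?_⟩
  rw [← Matrix.mul_assoc, ← Matrix.mul_assoc, hPMU, Matrix.mul_assoc, diagonal_mul_diagonal]
  simp [mul_inv_cancel₀ (hμ _)]

lemma mul_transpose_eq_diagonal_inv {𝕜 ι : Type*} [Field 𝕜] [Fintype ι] [DecidableEq ι]
    {X : Matrix ι ι 𝕜} {d : ι → 𝕜} (hd : ∀ k, d k ≠ 0) (h : Xᵀ * diagonal d * X = 1) :
    X * Xᵀ = diagonal d⁻¹ := by
  have hinv : X * (Xᵀ * diagonal d) = 1 := mul_eq_one_comm.mp h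
  calc X * Xᵀ = X * (Xᵀ * diagonal d) * diagonal d⁻¹ := by
        rw [Matrix.mul_assoc X, Matrix.mul_assoc, diagonal_mul_diagonal]
        simp [mul_inv_cancel₀ (hd _)]
    _ = diagonal d⁻¹ := by rw [hinv, Matrix.one_mul]

def communityMass {n K : ℕ} (θ : Fin n → ℝ) (Z : Matrix (Fin n) (Fin K) ℝ) (k : Fin K) : ℝ :=
  ∑ j, θ j ^ 2 * Z j k

section communityMass

variable {n K : ℕ} {Z : Matrix (Fin n) (Fin K) ℝ} {θ : Fin n → ℝ}

lemma communityMass_pos (hZ : IsMembership Z) (hθ : ∀ i, 0 < θ i) (k : Fin K) :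
    0 < communityMass θ Z k := by
  obtain ⟨j, hj⟩ := hZ.2.2 k
  refine Finset.sum_pos' (fun j _ => mul_nonneg (sq_nonneg _) (hZ.nonneg j k))
    ⟨j, Finset.mem_univ j, ?_⟩
  rw [hj, mul_one]
  exact pow_pos (hθ j) 2

lemma communityMass_le (hZ : IsMembership Z) (hθ : ∀ i, 0 ≤ θ i) (k : Fin K) :
    communityMass θ Z k ≤ thetaMax θ ^ 2 * nMax Z :=
  calc communityMass θ Z k ≤ ∑ j, thetaMax θ ^ 2 * Z j k :=
        Finset.sum_le_sum fun j _ => mul_le_mul_of_nonneg_right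
          (pow_le_pow_left₀ (hθ j) (le_thetaMax θ j) 2) (hZ.nonneg j k)
    _ ≤ thetaMax θ ^ 2 * nMax Z := by
        rw [← Finset.mul_sum]
        exact mul_le_mul_of_nonneg_left
          (le_csSup (Set.finite_range _).bddAbove ⟨k, rfl⟩) (sq_nonneg _)

lemma mul_transpose_apply_self_of_eq_diagonal_mul (hZ : IsMembership Z) (hθ : ∀ i, 0 < θ i)
    {X : Matrix (Fin K) (Fin K) ℝ} {U : Matrix (Fin n) (Fin K) ℝ}
    (hU : U = diagonal θ * Z * X) (hUorth : Uᵀ * U = 1) (i : Fin n) :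
    (U * Uᵀ) i i = θ i ^ 2 * ∑ k, Z i k * (communityMass θ Z k)⁻¹ := by
  have hXX : X * Xᵀ = diagonal (communityMass θ Z)⁻¹ := by
    refine mul_transpose_eq_diagonal_inv (fun k => (communityMass_pos hZ hθ k).ne') ?_
    have hΘ : diagonal θ * diagonal θ = diagonal fun j => θ j ^ 2 := by
      rw [diagonal_mul_diagonal]; simp only [sq]
    calc Xᵀ * diagonal (communityMass θ Z) * X
        = Xᵀ * (Zᵀ * (diagonal θ * diagonal θ) * Z) * X := by
          rw [hΘ, hZ.transpose_mul_diagonal_mul]; rfl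
      _ = Uᵀ * U := by simp only [hU, transpose_mul, diagonal_transpose, Matrix.mul_assoc]
      _ = 1 := hUorth
  have hUU : U * Uᵀ = diagonal θ * (Z * diagonal (communityMass θ Z)⁻¹ * Zᵀ) * diagonal θ := by
    simp only [hU, ← hXX, transpose_mul, diagonal_transpose, Matrix.mul_assoc]
  rw [hUU, mul_diagonal, diagonal_mul, hZ.mul_diagonal_mul_transpose_apply_self]
  simp only [Pi.inv_apply]
  ring

lemma le_vecNorm_row_of_eq_diagonal_mul (hZ : IsMembership Z) (hθ : ∀ i, 0 < θ i)
    {X : Matrix (Fin K) (Fin K) ℝ} {U : Matrix (Fin n) (Fin K) ℝ}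
    (hU : U = diagonal θ * Z * X) (hUorth : Uᵀ * U = 1) (i : Fin n) :
    thetaMin θ / (thetaMax θ * √(nMax Z)) ≤ vecNorm (U i) := by
  obtain ⟨k₀, -, -⟩ := Finset.exists_ne_zero_of_sum_ne_zero (hZ.2.1 i ▸ one_ne_zero)
  have hnMax : 0 ≤ nMax Z := (hZ.nMax_pos k₀.pos).le
  have hsum : (thetaMax θ ^ 2 * nMax Z)⁻¹ ≤ ∑ k, Z i k * (communityMass θ Z k)⁻¹ :=
    calc (thetaMax θ ^ 2 * nMax Z)⁻¹ = ∑ k, Z i k * (thetaMax θ ^ 2 * nMax Z)⁻¹ := by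
          rw [← Finset.sum_mul, hZ.2.1 i, one_mul]
      _ ≤ ∑ k, Z i k * (communityMass θ Z k)⁻¹ := Finset.sum_le_sum fun k _ =>
          mul_le_mul_of_nonneg_left
            (inv_anti₀ (communityMass_pos hZ hθ k) (communityMass_le hZ (hθ · |>.le) k))
            (hZ.nonneg i k)
  rw [vecNorm_row]
  refine Real.le_sqrt_of_sq_le ?_
  calc (thetaMin θ / (thetaMax θ * √(nMax Z))) ^ 2
      = thetaMin θ ^ 2 * (thetaMax θ ^ 2 * nMax Z)⁻¹ := by
        rw [div_pow, mul_pow, Real.sq_sqrt hnMax, div_eq_mul_inv]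
    _ ≤ θ i ^ 2 * ∑ k, Z i k * (communityMass θ Z k)⁻¹ :=
        mul_le_mul (pow_le_pow_left₀ (thetaMin_pos i.pos hθ).le (thetaMin_le θ i) 2) hsum
          (by positivity) (sq_nonneg _)
    _ = (U * Uᵀ) i i := (mul_transpose_apply_self_of_eq_diagonal_mul hZ hθ hU hUorth i).symm

end communityMass

lemma sum_OmegaL {n L K : ℕ} (θ : Fin n → ℝ) (Z : Matrix (Fin n) (Fin K) ℝ)
    (B : Fin L → Matrix (Fin K) (Fin K) ℝ) :
    ∑ l, OmegaL θ Z (B l) = diagonal θ * Z * ((∑ l, B l) * Zᵀ * diagonal θ) := by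
  simp only [OmegaL, Matrix.sum_mul, Matrix.mul_sum, Matrix.mul_assoc]

theorem stmt5_general {n L K : ℕ} (hn : 0 < n) (hK : 0 < K)
    (Z : Matrix (Fin n) (Fin K) ℝ) (θ : Fin n → ℝ)
    (B : Fin L → Matrix (Fin K) (Fin K) ℝ)
    (hmodel : MLDCSBM Z θ B)
    (c₁ : ℝ)
    (U : Matrix (Fin n) (Fin K) ℝ)
    (hUorth : Uᵀ * U = 1)
    (hUeig : ∀ k, ∃ μ : ℝ, μ ≠ 0 ∧
      (∑ l, OmegaL θ Z (B l)).mulVec (colVec U k) = μ • colVec U k)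
    (Ahat : Matrix (Fin n) (Fin n) ℝ)
    (Uhat : Matrix (Fin n) (Fin K) ℝ)
    (Q : Matrix (Fin K) (Fin K) ℝ) (hQ : Qᵀ * Q = 1)
    (hQbound : frobNorm (Uhat * Q - U) ≤
      2 * Real.sqrt (2 * K) * specNorm (Ahat - ∑ l, OmegaL θ Z (B l)) /
        (c₁ * thetaMin θ ^ 2 * nMin Z * L)) :
    frobNorm (rowNormalize Uhat * Q - rowNormalize U) ≤
      4 * Real.sqrt (2 * K) * thetaMax θ * Real.sqrt (nMax Z) *
        specNorm (Ahat - ∑ l, OmegaL θ Z (B l)) /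
          (c₁ * thetaMin θ ^ 3 * nMin Z * L) := by
  obtain ⟨hZ, hθ, -⟩ := hmodel
  have hθpos : ∀ i, 0 < θ i := fun i => (hθ i).1
  obtain ⟨X, hX⟩ := exists_eq_mul_of_forall_mulVec_eq_smul (sum_OmegaL θ Z B ▸ hUeig)
  have hr : 0 < thetaMin θ / (thetaMax θ * √(nMax Z)) := by
    have := (hθpos ⟨0, hn⟩).trans_le (le_thetaMax θ _)
    have := thetaMin_pos hn hθpos
    have := hZ.nMax_pos hK
    positivity
  calc frobNorm (rowNormalize Uhat * Q - rowNormalize U)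
      = frobNorm (rowNormalize (Uhat * Q) - rowNormalize U) := by
        rw [rowNormalize_mul Uhat (mul_eq_one_comm.mp hQ)]
    _ ≤ 2 / (thetaMin θ / (thetaMax θ * √(nMax Z))) * frobNorm (Uhat * Q - U) :=
        frobNorm_rowNormalize_sub_le _ _ hr (le_vecNorm_row_of_eq_diagonal_mul hZ hθpos hX hUorth)
    _ ≤ _ := mul_le_mul_of_nonneg_left hQbound (by positivity)
    _ = _ := by rw [div_div_eq_mul_div]; ring

theorem stmt5 {n L K : ℕ} (hn : 0 < n) (hL : 0 < L) (hK : 0 < K) (hKn : K ≤ n)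
    (Z : Matrix (Fin n) (Fin K) ℝ) (θ : Fin n → ℝ)
    (B : Fin L → Matrix (Fin K) (Fin K) ℝ)
    (hmodel : MLDCSBM Z θ B)
    (c₁ : ℝ) (hc₁ : 0 < c₁)
    (hrank : (∑ l, B l).rank = K)
    (hgap : c₁ * L ≤ kthAbsEig (∑ l, B l) K)
    (U : Matrix (Fin n) (Fin K) ℝ)
    (hUorth : Uᵀ * U = 1)
    (hUeig : ∀ k, ∃ μ : ℝ, μ ≠ 0 ∧
      (∑ l, OmegaL θ Z (B l)).mulVec (colVec U k) = μ • colVec U k)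
    (Ahat : Matrix (Fin n) (Fin n) ℝ) (hAhat : Ahat.IsSymm)
    (Uhat : Matrix (Fin n) (Fin K) ℝ)
    (hUhatOrth : Uhatᵀ * Uhat = 1)
    (hUhatEig : ∀ k, ∃ μ : ℝ,
      Ahat.mulVec (colVec Uhat k) = μ • colVec Uhat k ∧ kthAbsEig Ahat K ≤ |μ|)
    (hUhatRows : ∀ i, Uhat i ≠ 0)
    (Q : Matrix (Fin K) (Fin K) ℝ) (hQ : Qᵀ * Q = 1)
    (hQbound : frobNorm (Uhat * Q - U) ≤
      2 * Real.sqrt (2 * K) * specNorm (Ahat - ∑ l, OmegaL θ Z (B l)) /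
        (c₁ * thetaMin θ ^ 2 * nMin Z * L)) :
    frobNorm (rowNormalize Uhat * Q - rowNormalize U) ≤
      4 * Real.sqrt (2 * K) * thetaMax θ * Real.sqrt (nMax Z) *
        specNorm (Ahat - ∑ l, OmegaL θ Z (B l)) /
          (c₁ * thetaMin θ ^ 3 * nMin Z * L) :=
  stmt5_general hn hK Z θ B hmodel c₁ U hUorth hUeig Ahat Uhat Q hQ hQbound
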